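/- Let d be a Pieri sequence for the dimension sequence a = (a_1 < ... < a_k), set b = a - d, and define γ_d = τ_1 τ_2 ⋯ τ_k ∈ S_n where τ_i interchanges the intervals [a_i - d_i + 1, a_i] and [a_i + 1, a_{i+1}]. Then ℓ(γ_d) = Σ_i ℓ(τ_i) = Σ_i d_i (a_{i+1} - a_i). -/

import Mathlib

/-- Number of inversions of `u` among positions `1,…,n`. -/
def invLen (n : ℕ) (u : Equiv.Perm ℕ) : ℕ :=
  (((Finset.Icc 1 n) ×ˢ (Finset.Icc 1 n)).filter
    (fun p => p.1 < p.2 ∧ u p.2 < u p.1)).card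

/-- `d` (with `d 0 = 0 = d (k+1)`) is a Pieri sequence with maximum at position `j`. -/
def IsPieriSeq (k j : ℕ) (d : ℕ → ℕ) : Prop :=
  (∀ i, i < j → d i ≤ d (i + 1)) ∧
  (∀ i, j ≤ i → i ≤ k → d (i + 1) ≤ d i) ∧
  (∀ i, i ≤ k → |(d i : ℤ) - (d (i + 1) : ℤ)| ≤ 1)

/-- The ordered product `τ₁ τ₂ ⋯ τ_i`. -/
def gprod (τ : ℕ → Equiv.Perm ℕ) : ℕ → Equiv.Perm ℕ
  | 0 => 1
  | (i + 1) => gprod τ i * τ (i + 1)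

/-- `τ i` is the permutation interchanging the intervals `[a i - d i + 1, a i]`
and `[a i + 1, a (i+1)]`, fixing everything else. -/
def IsTauSeq (k : ℕ) (a d : ℕ → ℕ) (τ : ℕ → Equiv.Perm ℕ) : Prop :=
  ∀ i, 1 ≤ i → i ≤ k → ∀ p : ℕ,
    (a i - d i < p ∧ p ≤ a i → τ i p = p + (a (i + 1) - a i)) ∧
    (a i < p ∧ p ≤ a (i + 1) → τ i p = p - d i) ∧
    (¬(a i - d i < p ∧ p ≤ a (i + 1)) → τ i p = p)

lemma invLen_one (n : ℕ) : invLen n 1 = 0 := by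
  unfold invLen
  rw [Finset.card_eq_zero, Finset.filter_eq_empty_iff]
  rintro ⟨p, q⟩ _
  simp only [Equiv.Perm.one_apply]
  omega

lemma invLen_tau (n A D A' : ℕ) (t : Equiv.Perm ℕ)
    (hDA : D ≤ A) (hAA' : A < A') (hA'n : A' ≤ n)
    (htval : ∀ x, t x = if A - D < x ∧ x ≤ A then x + (A' - A)
      else if A < x ∧ x ≤ A' then x - D else x) :
    invLen n t = D * (A' - A) := by
  have hset : (((Finset.Icc 1 n) ×ˢ (Finset.Icc 1 n)).filter
      (fun p => p.1 < p.2 ∧ t p.2 < t p.1))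
      = (Finset.Ioc (A - D) A) ×ˢ (Finset.Ioc A A') := by
    ext ⟨p, q⟩
    simp only [Finset.mem_filter, Finset.mem_product, Finset.mem_Icc, Finset.mem_Ioc]
    constructor
    · rintro ⟨⟨hp, hq⟩, hpq, hinv⟩
      rw [htval p, htval q] at hinv
      split_ifs at hinv <;> omega
    · rintro ⟨hp, hq⟩
      rw [htval p, htval q]
      split_ifs <;> omega
  unfold invLen
  rw [hset, Finset.card_product, Nat.card_Ioc, Nat.card_Ioc]
  have h : A - (A - D) = D := by omega
  rw [h]

lemma invLen_mul (n A D A' : ℕ) (u t : Equiv.Perm ℕ)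
    (hDA : D ≤ A) (hAA' : A < A') (hA'n : A' ≤ n)
    (htval : ∀ x, t x = if A - D < x ∧ x ≤ A then x + (A' - A)
      else if A < x ∧ x ≤ A' then x - D else x)
    (hufix : ∀ x, A < x → u x = x)
    (humono : ∀ x y, A - D < x → x < y → u x < u y) :
    invLen n (u * t) = invLen n u + invLen n t := by
  classical
  have hubd : ∀ x, x ≤ A → u x ≤ A := by
    intro x hx
    by_contra h
    push_neg at h
    have h2 := hufix _ h
    have h3 := u.injective h2
    omega
  set S := ((Finset.Icc 1 n ×ˢ Finset.Icc 1 n).filter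
    (fun p : ℕ × ℕ => p.1 < p.2 ∧ (u * t) p.2 < (u * t) p.1)) with hS
  set T := ((Finset.Icc 1 n ×ˢ Finset.Icc 1 n).filter
    (fun p : ℕ × ℕ => p.1 < p.2 ∧ t p.2 < t p.1)) with hT
  have hTS : T ⊆ S := by
    intro x hx
    obtain ⟨p, q⟩ := x
    simp only [hT, hS, Finset.mem_filter, Finset.mem_product, Finset.mem_Icc] at hx ⊢
    simp only [Equiv.Perm.mul_apply] at hx ⊢
    obtain ⟨hm, hlt, hinv⟩ := hx
    refine ⟨hm, hlt, ?_⟩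
    have h1 : A - D < t q := by
      have hp' := htval p
      have hq' := htval q
      split_ifs at hp' hq' <;> omega
    exact humono _ _ h1 hinv
  have hbij : (S \ T).card = invLen n u := by
    unfold invLen
    apply Finset.card_bij (fun x _ => (t x.1, t x.2))
    · rintro ⟨p, q⟩ hx
      simp only [hS, hT, Finset.mem_sdiff, Finset.mem_filter, Finset.mem_product,
        Finset.mem_Icc] at hx
      simp only [Equiv.Perm.mul_apply] at hx
      simp only [Finset.mem_filter, Finset.mem_product, Finset.mem_Icc]
      obtain ⟨⟨⟨⟨hp1, hp2⟩, hq1, hq2⟩, hlt, hinv⟩, hnt⟩ := hx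
      have htp := htval p
      have htq := htval q
      have h1 : 1 ≤ t p ∧ t p ≤ n := by split_ifs at htp <;> omega
      have h2 : 1 ≤ t q ∧ t q ≤ n := by split_ifs at htq <;> omega
      have h3 : t p < t q := by
        rcases lt_trichotomy (t p) (t q) with h | h | h
        · exact h
        · exact absurd (t.injective h) (by omega)
        · exact absurd ⟨⟨⟨hp1, hp2⟩, hq1, hq2⟩, hlt, h⟩ hnt
      exact ⟨⟨h1, h2⟩, h3, hinv⟩
    · rintro ⟨p1, q1⟩ h1 ⟨p2, q2⟩ h2 heq
      rw [Prod.mk.injEq] at heq ⊢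
      exact ⟨t.injective heq.1, t.injective heq.2⟩
    · rintro ⟨p', q'⟩ hb
      simp only [Finset.mem_filter, Finset.mem_product, Finset.mem_Icc] at hb
      obtain ⟨⟨⟨hp1, hp2⟩, hq1, hq2⟩, hlt, hinv⟩ := hb
      have hq'A : q' ≤ A := by
        by_contra h
        push_neg at h
        have e1 := hufix q' h
        rcases le_or_gt p' A with h2 | h2
        · have := hubd p' h2; omega
        · have := hufix p' h2; omega
      have hrange : ∀ x x', t x = x' → 1 ≤ x' → x' ≤ n → 1 ≤ x ∧ x ≤ n := by
        intro x x' he hx1 hx2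
        have h := htval x
        constructor
        · rcases Nat.eq_zero_or_pos x with rfl | h0
          · split_ifs at h <;> omega
          · exact h0
        · by_contra hc
          push_neg at hc
          split_ifs at h <;> omega
      set p := t.symm p' with hpdef
      set q := t.symm q' with hqdef
      have htp : t p = p' := t.apply_symm_apply p'
      have htq : t q = q' := t.apply_symm_apply q'
      have hpm := hrange p p' htp hp1 hp2
      have hqm := hrange q q' htq hq1 hq2
      have hne : p ≠ q := by
        intro h
        rw [h, htq] at htp
        omega
      rcases Nat.lt_or_ge p q with hord | hord
      · refine ⟨(p, q), ?_, by rw [htp, htq]⟩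
        simp only [hS, hT, Finset.mem_sdiff, Finset.mem_filter, Finset.mem_product,
          Finset.mem_Icc]
        simp only [Equiv.Perm.mul_apply]
        refine ⟨⟨⟨hpm, hqm⟩, hord, by rw [htp, htq]; exact hinv⟩, ?_⟩
        rintro ⟨-, -, hc⟩
        rw [htp, htq] at hc
        omega
      · have hord' : q < p := by omega
        exfalso
        have hqpT : (q, p) ∈ T := by
          simp only [hT, Finset.mem_filter, Finset.mem_product, Finset.mem_Icc]
          exact ⟨⟨hqm, hpm⟩, hord', by rw [htp, htq]; omega⟩
        have := hTS hqpT
        simp only [hS, Finset.mem_filter] at this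
        simp only [Equiv.Perm.mul_apply] at this
        obtain ⟨-, -, hc⟩ := this
        rw [htp, htq] at hc
        omega
  have hcard := Finset.card_sdiff_add_card_eq_card hTS
  show S.card = invLen n u + T.card
  omega

theorem length_gamma (n k j : ℕ) (a d : ℕ → ℕ)
    (hk : 1 ≤ k) (hj1 : 1 ≤ j) (hjk : j ≤ k)
    (ha0 : a 0 = 0) (hak : a (k + 1) = n) (hamono : ∀ i, i ≤ k → a i < a (i + 1))
    (hd : IsPieriSeq k j d) (hd0 : d 0 = 0) (hdk : d (k + 1) = 0)
    (hda : ∀ i, 1 ≤ i → i ≤ k → d i ≤ a i - a (i - 1))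
    (τ : ℕ → Equiv.Perm ℕ) (hτ : IsTauSeq k a d τ) :
    invLen n (gprod τ k) = ∑ i ∈ Finset.Icc 1 k, invLen n (τ i) ∧
    invLen n (gprod τ k) = ∑ i ∈ Finset.Icc 1 k, d i * (a (i + 1) - a i) := by
  have hmono_a : ∀ y, y ≤ k + 1 → ∀ x, x ≤ y → a x ≤ a y := by
    intro y
    induction y with
    | zero =>
      intro _ x hx
      have hx0 : x = 0 := by omega
      rw [hx0]
    | succ m ih =>
      intro hm x hx
      rcases Nat.eq_or_lt_of_le hx with h | h
      · rw [h]
      · exact le_trans (ih (by omega) x (by omega)) (hamono m (by omega)).le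
  have htv : ∀ m, 1 ≤ m → m ≤ k → ∀ x, τ m x =
      if a m - d m < x ∧ x ≤ a m then x + (a (m + 1) - a m)
      else if a m < x ∧ x ≤ a (m + 1) then x - d m else x := by
    intro m h1 h2 x
    obtain ⟨c1, c2, c3⟩ := hτ m h1 h2 x
    have ham := hamono m h2
    split_ifs with hc1 hc2
    · exact c1 hc1
    · exact c2 hc2
    · exact c3 (by omega)
  have hgfix : ∀ i, i ≤ k → ∀ p, a (i + 1) < p → gprod τ i p = p := by
    intro i
    induction i with
    | zero => intro _ p _; rfl
    | succ m ih =>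
      intro hm p hp
      have ham := hamono (m + 1) hm
      have hτp : τ (m + 1) p = p := by
        rw [htv (m + 1) (by omega) hm p]
        split_ifs <;> omega
      show (gprod τ m * τ (m + 1)) p = p
      rw [Equiv.Perm.mul_apply, hτp]
      exact ih (by omega) p (by omega)
  have hgbd : ∀ i, i ≤ k → ∀ p, p ≤ a (i + 1) → gprod τ i p ≤ a (i + 1) := by
    intro i hi p hp
    by_contra h
    push_neg at h
    have h2 := hgfix i hi _ h
    have h3 := (gprod τ i).injective h2
    omega
  have hgmono : ∀ i, i ≤ k → ∀ p q, a i < p → p < q → gprod τ i p < gprod τ i q := by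
    intro i
    induction i with
    | zero => intro _ p q _ h; exact h
    | succ m ih =>
      intro hm p q hap hpq
      have hm' : m ≤ k := by omega
      have ham : a (m + 1) < a (m + 1 + 1) := hamono (m + 1) hm
      have ham0 : a m < a (m + 1) := hamono m hm'
      have hd' : d (m + 1) ≤ a (m + 1) - a m := by
        have h := hda (m + 1) (by omega) hm
        simpa using h
      have htp := htv (m + 1) (by omega) hm p
      have htq := htv (m + 1) (by omega) hm q
      show (gprod τ m * τ (m + 1)) p < (gprod τ m * τ (m + 1)) q
      rw [Equiv.Perm.mul_apply, Equiv.Perm.mul_apply]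
      by_cases hq : q ≤ a (m + 1 + 1)
      · have h1 : τ (m + 1) p = p - d (m + 1) := by rw [htp]; split_ifs <;> omega
        have h2 : τ (m + 1) q = q - d (m + 1) := by rw [htq]; split_ifs <;> omega
        rw [h1, h2]
        exact ih hm' _ _ (by omega) (by omega)
      · push_neg at hq
        have h2 : τ (m + 1) q = q := by rw [htq]; split_ifs <;> omega
        rw [h2, hgfix m hm' q (by omega)]
        by_cases hp : p ≤ a (m + 1 + 1)
        · have h1 : τ (m + 1) p = p - d (m + 1) := by rw [htp]; split_ifs <;> omega
          rw [h1]
          rcases le_or_gt (p - d (m + 1)) (a (m + 1)) with hc | hc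
          · have := hgbd m hm' _ hc; omega
          · rw [hgfix m hm' _ hc]; omega
        · push_neg at hp
          have h1 : τ (m + 1) p = p := by rw [htp]; split_ifs <;> omega
          rw [h1, hgfix m hm' p (by omega)]
          exact hpq
  have hsum : ∀ i, i ≤ k → invLen n (gprod τ i) =
      ∑ m ∈ Finset.Icc 1 i, invLen n (τ m) := by
    intro i
    induction i with
    | zero =>
      intro _
      show invLen n 1 = _
      rw [invLen_one]
      simp
    | succ m ih =>
      intro hm
      have hm' : m ≤ k := by omega
      have ham : a (m + 1) < a (m + 1 + 1) := hamono (m + 1) hm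
      have ham0 : a m < a (m + 1) := hamono m hm'
      have hd' : d (m + 1) ≤ a (m + 1) - a m := by
        have h := hda (m + 1) (by omega) hm
        simpa using h
      have hn : a (m + 1 + 1) ≤ n := by
        have := hmono_a (k + 1) le_rfl (m + 1 + 1) (by omega)
        omega
      have key : invLen n (gprod τ m * τ (m + 1)) =
          invLen n (gprod τ m) + invLen n (τ (m + 1)) := by
        apply invLen_mul n (a (m + 1)) (d (m + 1)) (a (m + 1 + 1))
        · omega
        · exact ham
        · exact hn
        · exact htv (m + 1) (by omega) hm
        · intro x hx; exact hgfix m hm' x hx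
        · intro x y h1 h2
          exact hgmono m hm' x y (by omega) h2
      show invLen n (gprod τ m * τ (m + 1)) = _
      rw [key, ih hm', Finset.sum_Icc_succ_top (by omega : 1 ≤ m + 1)]
  constructor
  · exact hsum k le_rfl
  · rw [hsum k le_rfl]
    apply Finset.sum_congr rfl
    intro m hm
    simp only [Finset.mem_Icc] at hm
    have hdm : d m ≤ a m := by
      have h := hda m hm.1 hm.2
      omega
    have hn : a (m + 1) ≤ n := by
      have := hmono_a (k + 1) le_rfl (m + 1) (by omega)
      omega
    exact invLen_tau n (a m) (d m) (a (m + 1)) (τ m) hdm (hamono m hm.2) hn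
      (htv m hm.1 hm.2)
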